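/- On a finite connected graph with n vertices, if a deterministic infinite sequence of averaging updates (each with fixed parameter μ ∈ (0,1/2]) contains every edge infinitely often, then for every vertex v the value η_k(v) converges as k → ∞ to the average (1/n)∑_{u∈V} η₀(u). -/
import Mathlib


open Finset Filter

/-- One averaging update along the edge `⟨u,w⟩` with parameter `μ`. -/
def upd {V : Type*} [DecidableEq V] (u w : V) (μ : ℝ) (η : V → ℝ) : V → ℝ :=
  fun v => if v = u then (1 - μ) * η u + μ * η w
    else if v = w then μ * η u + (1 - μ) * η w
    else η v

/-- The Dirac profile at `r`. -/
def delta {V : Type*} [DecidableEq V] (r : V) : V → ℝ := fun v => if v = r then 1 else 0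

/-- Apply a finite sequence of updates (edge together with parameter) to a profile. -/
def applySteps {V : Type*} [DecidableEq V] (steps : List (V × V × ℝ)) (η : V → ℝ) : V → ℝ :=
  steps.foldl (fun acc s => upd s.1 s.2.1 s.2.2 acc) η

lemma upd_comm {V : Type*} [DecidableEq V] (u w : V) (μ : ℝ) (η : V → ℝ) :
    upd u w μ η = upd w u μ η := by
  funext v
  unfold upd
  by_cases huw : u = w
  · subst huw; split_ifs <;> ring
  · have hwu : ¬ w = u := fun h => huw h.symm
    by_cases h1 : v = u <;> by_cases h2 : v = w
    · exact absurd (by rw [← h1, h2]) huw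
    all_goals simp [h1, h2, huw, hwu] <;> ring

lemma upd_apply {V : Type*} [DecidableEq V] {u w : V} (huw : u ≠ w) (μ : ℝ) (η : V → ℝ) (v : V) :
    upd u w μ η v = η v + (if v = u then μ * (η w - η u) else 0)
      + (if v = w then μ * (η u - η w) else 0) := by
  unfold upd
  have hwu : ¬ w = u := fun h => huw h.symm
  have huw' : ¬ u = w := huw
  by_cases h1 : v = u <;> by_cases h2 : v = w
  · exact absurd (by rw [← h1, h2]) huw
  all_goals simp [h1, h2, huw', hwu] <;> ring

lemma sum_upd {V : Type*} [DecidableEq V] {u w : V} (huw : u ≠ w) (μ : ℝ) (η : V → ℝ)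
    (B : Finset V) :
    ∑ b ∈ B, upd u w μ η b = (∑ b ∈ B, η b) + (if u ∈ B then μ * (η w - η u) else 0)
      + (if w ∈ B then μ * (η u - η w) else 0) := by
  simp_rw [upd_apply huw]
  rw [Finset.sum_add_distrib, Finset.sum_add_distrib, Finset.sum_ite_eq' B u,
    Finset.sum_ite_eq' B w]

noncomputable def minSum {V : Type*} [Fintype V] [DecidableEq V] (η : V → ℝ) (j : ℕ) : ℝ :=
  if h : ((univ : Finset V).powersetCard j).Nonempty then
    (univ.powersetCard j).inf' h (fun B => ∑ b ∈ B, η b) else 0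

lemma minSum_le {V : Type*} [Fintype V] [DecidableEq V] (η : V → ℝ) {j : ℕ} {B : Finset V}
    (hB : B.card = j) : minSum η j ≤ ∑ b ∈ B, η b := by
  have hmem : B ∈ (univ : Finset V).powersetCard j := by
    simp [Finset.mem_powersetCard, hB]
  rw [minSum, dif_pos ⟨B, hmem⟩]
  exact Finset.inf'_le _ hmem

lemma le_minSum {V : Type*} [Fintype V] [DecidableEq V] (η : V → ℝ) {j : ℕ}
    (hj : j ≤ Fintype.card V) {c : ℝ} (h : ∀ B : Finset V, B.card = j → c ≤ ∑ b ∈ B, η b) :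
    c ≤ minSum η j := by
  have hne : ((univ : Finset V).powersetCard j).Nonempty := by
    rw [Finset.powersetCard_nonempty]; simpa using hj
  rw [minSum, dif_pos hne]
  refine Finset.le_inf' hne _ fun B hB => ?_
  rw [Finset.mem_powersetCard] at hB
  exact h B hB.2

lemma exists_minSum {V : Type*} [Fintype V] [DecidableEq V] (η : V → ℝ) {j : ℕ}
    (hj : j ≤ Fintype.card V) : ∃ B : Finset V, B.card = j ∧ ∑ b ∈ B, η b = minSum η j := by
  have hne : ((univ : Finset V).powersetCard j).Nonempty := by
    rw [Finset.powersetCard_nonempty]; simpa using hj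
  obtain ⟨B, hB, hEq⟩ := Finset.exists_mem_eq_inf' hne (fun B => ∑ b ∈ B, η b)
  rw [Finset.mem_powersetCard] at hB
  exact ⟨B, hB.2, by rw [minSum, dif_pos hne, hEq]⟩

lemma minSum_zero {V : Type*} [Fintype V] [DecidableEq V] (η : V → ℝ) : minSum η 0 = 0 := by
  have h1 : minSum η 0 ≤ 0 := by simpa using minSum_le η (B := ∅) rfl
  have h2 : (0:ℝ) ≤ minSum η 0 := le_minSum η (Nat.zero_le _) (by
    intro B hB
    rw [Finset.card_eq_zero] at hB
    simp [hB])
  linarith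

lemma minSum_card {V : Type*} [Fintype V] [DecidableEq V] (η : V → ℝ) :
    minSum η (Fintype.card V) = ∑ b, η b := by
  have h1 : minSum η (Fintype.card V) ≤ ∑ b, η b :=
    minSum_le η (by simp)
  have h2 : (∑ b, η b) ≤ minSum η (Fintype.card V) := le_minSum η le_rfl (by
    intro B hB
    have : B = univ := Finset.eq_univ_of_card B (by simpa using hB)
    rw [this])
  linarith

lemma swap_card {V : Type*} [DecidableEq V] {B : Finset V} {u w : V} (hu : u ∈ B) (hw : w ∉ B) :
    (insert w (B.erase u)).card = B.card := by
  rw [Finset.card_insert_of_notMem (fun h => hw (Finset.mem_of_mem_erase h)),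
    Finset.card_erase_of_mem hu]
  have h1 : 1 ≤ B.card := Finset.card_pos.mpr ⟨u, hu⟩
  omega

lemma swap_sum {V : Type*} [DecidableEq V] (η : V → ℝ) {B : Finset V} {u w : V}
    (hu : u ∈ B) (hw : w ∉ B) :
    ∑ b ∈ insert w (B.erase u), η b = (∑ b ∈ B, η b) - η u + η w := by
  rw [Finset.sum_insert (fun h => hw (Finset.mem_of_mem_erase h)),
    Finset.sum_erase_eq_sub hu]
  ring

lemma minSum_mono_upd {V : Type*} [Fintype V] [DecidableEq V] {u w : V} (huw : u ≠ w)
    {μ : ℝ} (hμ0 : 0 ≤ μ) (hμ1 : μ ≤ 1) (η : V → ℝ) (j : ℕ) :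
    minSum η j ≤ minSum (upd u w μ η) j := by
  by_cases hne : ((univ : Finset V).powersetCard j).Nonempty
  · have hj : j ≤ Fintype.card V := by
      rw [Finset.powersetCard_nonempty] at hne; simpa using hne
    refine le_minSum _ hj fun B hB => ?_
    rw [sum_upd huw]
    have hle : minSum η j ≤ ∑ b ∈ B, η b := minSum_le η hB
    by_cases hu : u ∈ B <;> by_cases hw : w ∈ B <;> simp [hu, hw]
    · linarith
    · -- u ∈ B, w ∉ B
      have h2 : minSum η j ≤ (∑ b ∈ B, η b) - η u + η w := by
        rw [← swap_sum η hu hw]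
        exact minSum_le η (by rw [swap_card hu hw, hB])
      nlinarith [mul_nonneg hμ0 (sub_nonneg.mpr h2), mul_nonneg (by linarith : (0:ℝ) ≤ 1 - μ) (sub_nonneg.mpr hle)]
    · -- w ∈ B, u ∉ B
      have h2 : minSum η j ≤ (∑ b ∈ B, η b) - η w + η u := by
        rw [← swap_sum η hw hu]
        exact minSum_le η (by rw [swap_card hw hu, hB])
      nlinarith [mul_nonneg hμ0 (sub_nonneg.mpr h2), mul_nonneg (by linarith : (0:ℝ) ≤ 1 - μ) (sub_nonneg.mpr hle)]
    · linarith
  · rw [minSum, minSum, dif_neg hne, dif_neg hne]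

lemma exists_cross {V : Type*} [Fintype V] [DecidableEq V] {G : SimpleGraph V}
    (hG : G.Connected) {A : Finset V} (hne : A.Nonempty) (hproper : A ≠ univ) :
    ∃ a b : V, a ∈ A ∧ b ∉ A ∧ G.Adj a b := by
  obtain ⟨a, ha⟩ := hne
  obtain ⟨b, hb⟩ : ∃ b, b ∉ A := by
    by_contra h
    push_neg at h
    exact hproper (Finset.eq_univ_iff_forall.mpr h)
  obtain ⟨p⟩ := hG.preconnected a b
  clear hproper
  induction p with
  | nil => exact absurd ha hb
  | @cons x y z h p ih =>
    by_cases hy : y ∈ A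
    · exact ih hy hb
    · exact ⟨x, y, ha, hy, h⟩


set_option maxHeartbeats 1000000 in
theorem averaging_converges_to_mean {V : Type*} [Fintype V] [DecidableEq V]
    (G : SimpleGraph V) (hG : G.Connected)
    (μ : ℝ) (hμ : μ ∈ Set.Ioc (0:ℝ) (1/2))
    (steps : ℕ → V × V) (hadj : ∀ k, G.Adj (steps k).1 (steps k).2)
    (hio : ∀ u w, G.Adj u w → ∀ N, ∃ k, N ≤ k ∧ (steps k = (u, w) ∨ steps k = (w, u)))
    (η₀ : V → ℝ) (η : ℕ → V → ℝ) (h0 : η 0 = η₀)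
    (hstep : ∀ k, η (k + 1) = upd (steps k).1 (steps k).2 μ (η k)) (v : V) :
    Tendsto (fun k => η k v) atTop
      (nhds ((∑ u, η₀ u) / (Fintype.card V : ℝ))) := by
  obtain ⟨hμ0, hμh⟩ := hμ
  have hμ1 : μ ≤ 1 := by linarith
  have hnev : Nonempty V := hG.nonempty
  have hup : (univ : Finset V).Nonempty := Finset.univ_nonempty
  have hn1 : 1 ≤ Fintype.card V := Fintype.card_pos
  have hne_steps : ∀ k, (steps k).1 ≠ (steps k).2 := fun k => (hadj k).ne
  -- sum invariance
  have hsum : ∀ k, ∑ x, η k x = ∑ x, η₀ x := by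
    intro k
    induction k with
    | zero => rw [h0]
    | succ k ih =>
      rw [hstep k, sum_upd (hne_steps k) μ (η k), ← ih]
      simp only [Finset.mem_univ, if_true]
      ring
  -- uniform upper bound
  obtain ⟨M0, hM0⟩ : ∃ M0, ∀ k x, η k x ≤ M0 := by
    refine ⟨univ.sup' hup η₀, ?_⟩
    intro k
    induction k with
    | zero => intro x; rw [h0]; exact Finset.le_sup' _ (Finset.mem_univ x)
    | succ k ih =>
      intro x
      rw [hstep k]
      unfold upd
      have h1 := ih (steps k).1
      have h2 := ih (steps k).2
      split_ifs <;> nlinarith [ih x]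
  -- monotonicity of minSum along the dynamics
  have hmono : ∀ j, Monotone (fun k => minSum (η k) j) := by
    intro j
    apply monotone_nat_of_le_succ
    intro k
    show minSum (η k) j ≤ minSum (η (k+1)) j
    rw [hstep k]
    exact minSum_mono_upd (hne_steps k) hμ0.le hμ1 (η k) j
  have hbdd : ∀ j, j ≤ Fintype.card V → BddAbove (Set.range fun k => minSum (η k) j) := by
    intro j hj
    refine ⟨(j : ℝ) * M0, ?_⟩
    rintro x ⟨k, rfl⟩
    show minSum (η k) j ≤ (j : ℝ) * M0
    obtain ⟨B, hBcard, hBsum⟩ := exists_minSum (η k) hj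
    rw [← hBsum]
    calc ∑ b ∈ B, η k b ≤ B.card • M0 :=
          Finset.sum_le_card_nsmul B _ M0 (fun x _ => hM0 k x)
      _ = (j : ℝ) * M0 := by rw [hBcard, nsmul_eq_mul]
  set L : ℕ → ℝ := fun j => ⨆ k, minSum (η k) j with hLdef
  have hconv : ∀ j, j ≤ Fintype.card V →
      Tendsto (fun k => minSum (η k) j) atTop (nhds (L j)) := by
    intro j hj
    exact tendsto_atTop_ciSup (hmono j) (hbdd j hj)
  have hsL : ∀ j, j ≤ Fintype.card V → ∀ k, minSum (η k) j ≤ L j := by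
    intro j hj k
    exact le_ciSup (hbdd j hj) k
  have hL0 : L 0 = 0 := by
    rw [hLdef]
    simp only [minSum_zero]
    exact ciSup_const
  have hLn : L (Fintype.card V) = ∑ x, η₀ x := by
    rw [hLdef]
    have h : ∀ k, minSum (η k) (Fintype.card V) = ∑ x, η₀ x := fun k => by
      rw [minSum_card]; exact hsum k
    simp only [h]
    exact ciSup_const
  -- the key "no gap" lemma
  have key : ∀ i, i + 2 ≤ Fintype.card V → L (i+2) - L (i+1) ≤ L (i+1) - L i := by
    intro i hi
    by_contra hcon
    push_neg at hcon
    have hg : 0 < L (i+2) - 2*L (i+1) + L i := by linarith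
    set ε := μ * (L (i+2) - 2*L (i+1) + L i) / 4 with hεdef
    have hε : 0 < ε := by
      have := mul_pos hμ0 hg
      rw [hεdef]; linarith
    have hε4 : μ * (L (i+2) - 2*L (i+1) + L i) = 4 * ε := by rw [hεdef]; ring
    have hg2 : 2*ε < L (i+2) - 2*L (i+1) + L i := by
      linarith [hε4, mul_le_mul_of_nonneg_right hμh hg.le]
    have e1 : ∀ᶠ k in atTop, L i - ε < minSum (η k) i :=
      (hconv i (by omega)).eventually (eventually_gt_nhds (by linarith))
    have e2 : ∀ᶠ k in atTop, L (i+1) - ε < minSum (η k) (i+1) :=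
      (hconv (i+1) (by omega)).eventually (eventually_gt_nhds (by linarith))
    have e3 : ∀ᶠ k in atTop, L (i+2) - ε < minSum (η k) (i+2) :=
      (hconv (i+2) (by omega)).eventually (eventually_gt_nhds (by linarith))
    obtain ⟨t, ht⟩ := eventually_atTop.mp ((e1.and (e2.and e3)))
    -- crossing an optimal cut is impossible after time t
    have hcross : ∀ k, t ≤ k → ∀ A : Finset V, A.card = i + 1 →
        (∑ b ∈ A, η k b) = minSum (η k) (i+1) →
        ∀ u w : V, u ∈ A → w ∉ A → u ≠ w → η (k+1) = upd u w μ (η k) → False := by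
      intro k hk A hcard hmin u w hu hw huw hupd
      obtain ⟨hti, hti1, hti2⟩ := ht k hk
      have hlowv : ∀ a ∈ A, η k a ≤ L (i+1) - L i + ε := by
        intro a ha
        have h1 : minSum (η k) i ≤ ∑ b ∈ A.erase a, η k b :=
          minSum_le _ (by simp [Finset.card_erase_of_mem ha, hcard])
        have h2 : ∑ b ∈ A.erase a, η k b = (∑ b ∈ A, η k b) - η k a :=
          Finset.sum_erase_eq_sub ha
        have h3 := hsL (i+1) (by omega) k
        linarith
      have hhighv : ∀ x, x ∉ A → L (i+2) - L (i+1) - ε ≤ η k x := by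
        intro x hx
        have h1 : minSum (η k) (i+2) ≤ ∑ b ∈ insert x A, η k b :=
          minSum_le _ (by rw [Finset.card_insert_of_notMem hx, hcard])
        have h2 : ∑ b ∈ insert x A, η k b = η k x + ∑ b ∈ A, η k b :=
          Finset.sum_insert hx
        have h3 := hsL (i+1) (by omega) k
        linarith
      have hd : L (i+2) - 2*L (i+1) + L i - 2*ε ≤ η k w - η k u := by
        have hA1 := hlowv u hu
        have hA2 := hhighv w hw
        linarith
      have hg2' : 0 < L (i+2) - 2*L (i+1) + L i - 2*ε := by linarith
      have hlb : minSum (η k) (i+1) + μ * (L (i+2) - 2*L (i+1) + L i - 2*ε)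
          ≤ minSum (η (k+1)) (i+1) := by
        apply le_minSum _ (by omega)
        intro B hB
        rw [hupd, sum_upd huw]
        have h4 := hsL (i+1) (by omega) k
        by_cases hu' : u ∈ B <;> by_cases hw' : w ∈ B <;> simp only [hu', hw', if_true, if_false]
        · -- both in
          have h1 : minSum (η k) i ≤ ∑ b ∈ B.erase w, η k b :=
            minSum_le _ (by simp [Finset.card_erase_of_mem hw', hB])
          have h2 : ∑ b ∈ B.erase w, η k b = (∑ b ∈ B, η k b) - η k w :=
            Finset.sum_erase_eq_sub hw'
          have h3 := hhighv w hw
          linarith [mul_nonneg (show (0:ℝ) ≤ 1 - μ by linarith) hg2'.le]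
        · -- u ∈ B, w ∉ B
          have h1 : minSum (η k) (i+1) ≤ ∑ b ∈ B, η k b := minSum_le _ hB
          linarith [mul_le_mul_of_nonneg_left hd hμ0.le]
        · -- w ∈ B, u ∉ B
          have h2 : minSum (η k) (i+1) ≤ (∑ b ∈ B, η k b) - η k w + η k u := by
            rw [← swap_sum (η k) hw' hu']
            exact minSum_le _ (by rw [swap_card hw' hu', hB])
          linarith [mul_le_mul_of_nonneg_left hd (show (0:ℝ) ≤ 1 - μ by linarith),
            mul_nonneg (show (0:ℝ) ≤ 1 - 2*μ by linarith) hg2'.le]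
        · -- neither
          have hBA : (B \ A).Nonempty := by
            rw [Finset.sdiff_nonempty]
            intro hsub
            have hBeq : B = A := Finset.eq_of_subset_of_card_le hsub (by rw [hB, hcard])
            exact hu' (hBeq ▸ hu)
          obtain ⟨x, hx⟩ := hBA
          rw [Finset.mem_sdiff] at hx
          obtain ⟨hxB, hxA⟩ := hx
          have h1 : minSum (η k) i ≤ ∑ b ∈ B.erase x, η k b :=
            minSum_le _ (by simp [Finset.card_erase_of_mem hxB, hB])
          have h2 : ∑ b ∈ B.erase x, η k b = (∑ b ∈ B, η k b) - η k x :=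
            Finset.sum_erase_eq_sub hxB
          have h3 := hhighv x hxA
          linarith [mul_nonneg (show (0:ℝ) ≤ 1 - μ by linarith) hg2'.le]
      have hub : minSum (η (k+1)) (i+1) ≤ L (i+1) := hsL (i+1) (by omega) (k+1)
      have hgain : ε < μ * (L (i+2) - 2*L (i+1) + L i - 2*ε) := by
        linarith [hε4, mul_le_mul_of_nonneg_right (show 2*μ ≤ 1 by linarith) hε.le]
      linarith
    -- an optimal cut persists after time t
    obtain ⟨A, hAcard, hAmin⟩ := exists_minSum (η t) (show i+1 ≤ Fintype.card V by omega)
    have hinv : ∀ k, t ≤ k → ∑ b ∈ A, η k b = minSum (η k) (i+1) := by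
      intro k hk
      induction k with
      | zero =>
        have h : t = 0 := by omega
        exact h ▸ hAmin
      | succ k ih =>
        rcases Nat.lt_or_ge t (k+1) with h | h
        · have hk' : t ≤ k := by omega
          have hmin_k := ih hk'
          have hupd : η (k+1) = upd (steps k).1 (steps k).2 μ (η k) := hstep k
          have huw : (steps k).1 ≠ (steps k).2 := hne_steps k
          by_cases hu : (steps k).1 ∈ A <;> by_cases hw : (steps k).2 ∈ A
          · have h1 : ∑ b ∈ A, η (k+1) b = ∑ b ∈ A, η k b := by
              rw [hupd, sum_upd huw]
              simp only [hu, hw, if_true]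
              ring
            have h2 : minSum (η k) (i+1) ≤ minSum (η (k+1)) (i+1) := by
              rw [hupd]
              exact minSum_mono_upd huw hμ0.le hμ1 (η k) (i+1)
            have h3 : minSum (η (k+1)) (i+1) ≤ ∑ b ∈ A, η (k+1) b := minSum_le _ hAcard
            linarith
          · exact (hcross k hk' A hAcard hmin_k _ _ hu hw huw hupd).elim
          · exact (hcross k hk' A hAcard hmin_k _ _ hw hu (Ne.symm huw)
              (by rw [hupd, upd_comm])).elim
          · have h1 : ∑ b ∈ A, η (k+1) b = ∑ b ∈ A, η k b := by
              rw [hupd, sum_upd huw]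
              simp only [hu, hw, if_false]
              ring
            have h2 : minSum (η k) (i+1) ≤ minSum (η (k+1)) (i+1) := by
              rw [hupd]
              exact minSum_mono_upd huw hμ0.le hμ1 (η k) (i+1)
            have h3 : minSum (η (k+1)) (i+1) ≤ ∑ b ∈ A, η (k+1) b := minSum_le _ hAcard
            linarith
        · have h' : t = k + 1 := by omega
          exact h' ▸ hAmin
    have hAne : A.Nonempty := Finset.card_pos.mp (by omega)
    have hAproper : A ≠ univ := by
      intro hAu
      have := Finset.card_univ (α := V)
      rw [hAu] at hAcard
      omega
    obtain ⟨a, b, haA, hbA, hab⟩ := exists_cross hG hAne hAproper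
    obtain ⟨k, hk, hsk⟩ := hio a b hab t
    have hmink := hinv k hk
    rcases hsk with h | h
    · exact hcross k hk A hAcard hmink a b haA hbA hab.ne (by rw [hstep k, h])
    · exact hcross k hk A hAcard hmink a b haA hbA hab.ne
        (by rw [hstep k, h]; exact upd_comm b a μ (η k))
  -- chain the gaps
  have chain : ∀ i, i + 1 ≤ Fintype.card V → L (i+1) - L i ≤ L 1 - L 0 := by
    intro i
    induction i with
    | zero => intro _; exact le_rfl
    | succ m ih =>
      intro h
      exact le_trans (key m h) (ih (by omega))
  obtain ⟨p, hp⟩ : ∃ p, Fintype.card V = p + 1 := ⟨Fintype.card V - 1, by omega⟩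
  have hlow : ∀ k x, minSum (η k) 1 ≤ η k x := by
    intro k x
    simpa using minSum_le (η k) (B := {x}) (Finset.card_singleton x)
  have hhigh : ∀ k x, η k x ≤ (∑ y, η₀ y) - minSum (η k) p := by
    intro k x
    have h1 : minSum (η k) p ≤ ∑ b ∈ univ.erase x, η k b :=
      minSum_le _ (by rw [Finset.card_erase_of_mem (Finset.mem_univ x), Finset.card_univ]; omega)
    have h2 : ∑ b ∈ univ.erase x, η k b = (∑ b, η k b) - η k x :=
      Finset.sum_erase_eq_sub (Finset.mem_univ x)
    have h3 := hsum k
    linarith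
  have hupconv : Tendsto (fun k => (∑ y, η₀ y) - minSum (η k) p) atTop
      (nhds ((∑ y, η₀ y) - L p)) := tendsto_const_nhds.sub (hconv p (by omega))
  have hc1 := hconv 1 (by omega)
  have hLp1 : L (p+1) = ∑ y, η₀ y := by rw [← hp]; exact hLn
  have hple : (∑ y, η₀ y) - L p ≤ L 1 := by
    have := chain p (by omega)
    rw [hL0] at this
    linarith
  have hgeq : L 1 ≤ (∑ y, η₀ y) - L p :=
    le_of_tendsto_of_tendsto' hc1 hupconv (fun k => (hlow k v).trans (hhigh k v))
  have hUeq : (∑ y, η₀ y) - L p = L 1 := le_antisymm hple hgeq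
  have hall : ∀ x, Tendsto (fun k => η k x) atTop (nhds (L 1)) := by
    intro x
    exact tendsto_of_tendsto_of_tendsto_of_le_of_le hc1 (hUeq ▸ hupconv)
      (fun k => hlow k x) (fun k => hhigh k x)
  have hsc : Tendsto (fun k => ∑ x, η k x) atTop (nhds (∑ _x : V, L 1)) :=
    tendsto_finset_sum _ (fun x _ => hall x)
  have hconst : (fun k => ∑ x, η k x) = fun _ => ∑ x, η₀ x := funext hsum
  have hid : (∑ _x : V, L 1) = ∑ x, η₀ x :=
    tendsto_nhds_unique hsc (hconst ▸ tendsto_const_nhds)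
  have hcv : (∑ _x : V, L 1) = (Fintype.card V : ℝ) * L 1 := by
    rw [Finset.sum_const, Finset.card_univ, nsmul_eq_mul]
  have hL1 : L 1 = (∑ x, η₀ x) / (Fintype.card V : ℝ) := by
    rw [eq_div_iff (show (Fintype.card V : ℝ) ≠ 0 by
      have : Fintype.card V ≠ 0 := by omega
      exact_mod_cast this)]
    linarith [hid, hcv]
  have := hall v
  rw [hL1] at this
  exact this
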